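/- Let F be a standard Borel space. For a measurable set G ⊆ F and n ∈ ℕ, define the counting event C(G, n) := {S ∈ Finset F : |S ∩ G| = n}. Then the σ-algebra on Finset F comapped along ι from the canonical σ-algebra on Measure F is equal to the σ-algebra generated by the family of all counting events C(G, n) with G ⊆ F measurable and n ∈ ℕ. -/

import Mathlib

/-! Since `ι S G = |S ∩ G|` is a natural number, the evaluation maps `S ↦ ι S G` that generate the
comapped σ-algebra are measurable exactly when their fibres, the counting events, are. -/

open MeasureTheory

/-- The canonical embedding of a database instance (a finite set of facts)
into the space of measures: `S ↦ ∑_{x ∈ S} δ_x`. -/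
noncomputable def iota {F : Type*} [MeasurableSpace F] (S : Finset F) : Measure F :=
  ∑ x ∈ S, Measure.dirac x

section

open MeasurableSpace

variable {F : Type*} [MeasurableSpace F]

def countingEvents (F : Type*) [MeasurableSpace F] : Set (Set (Finset F)) :=
  {C | ∃ (G : Set F) (n : ℕ), MeasurableSet G ∧ C = {S : Finset F | ((S : Set F) ∩ G).ncard = n}}

lemma iota_apply (S : Finset F) {G : Set F} (hG : MeasurableSet G) :
    iota S G = ((S : Set F) ∩ G).ncard := by
  classical
  have hinter : (S : Set F) ∩ G = ↑(S.filter (· ∈ G)) := by ext; simp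
  rw [hinter, Set.ncard_coe_finset, iota, Measure.finsetSum_apply]
  simp [Measure.dirac_apply' _ hG, Set.indicator_apply]

lemma measurable_ncard_inter {G : Set F} (hG : MeasurableSet G) :
    Measurable[generateFrom (countingEvents F)] fun S : Finset F => ((S : Set F) ∩ G).ncard :=
  @measurable_to_countable' _ _ _ _ (generateFrom _) _
    fun n => measurableSet_generateFrom ⟨G, n, hG, rfl⟩

lemma measurable_iota :
    Measurable[generateFrom (countingEvents F)] (iota : Finset F → Measure F) :=
  @Measure.measurable_of_measurable_coe _ _ _ (generateFrom _) _ fun G hG => by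
    simp_rw [iota_apply _ hG]
    exact measurable_from_top.comp (measurable_ncard_inter hG)

lemma measurableSet_comap_iota_of_mem_countingEvents {C : Set (Finset F)}
    (hC : C ∈ countingEvents F) : MeasurableSet[MeasurableSpace.comap iota inferInstance] C := by
  obtain ⟨G, n, hG, rfl⟩ := hC
  refine ⟨(fun μ : Measure F => μ G) ⁻¹' {(n : ENNReal)},
    Measure.measurable_coe hG (measurableSet_singleton _), ?_⟩
  ext S
  simp [iota_apply S hG]

end

theorem comap_iota_eq_generateFrom_countingEvents_general (F : Type*) [MeasurableSpace F] :
    MeasurableSpace.comap iota (inferInstance : MeasurableSpace (Measure F)) =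
    MeasurableSpace.generateFrom
      {C : Set (Finset F) | ∃ (G : Set F) (n : ℕ), MeasurableSet G ∧
        C = {S : Finset F | ((S : Set F) ∩ G).ncard = n}} :=
  le_antisymm measurable_iota.comap_le
    (MeasurableSpace.generateFrom_le fun _ => measurableSet_comap_iota_of_mem_countingEvents)

/-- The σ-algebra on `Finset F` comapped along `ι` from the canonical σ-algebra on
`Measure F` coincides with the σ-algebra generated by the counting events
`C(G, n) = {S : |S ∩ G| = n}` for `G ⊆ F` measurable and `n ∈ ℕ`. -/
theorem comap_iota_eq_generateFrom_countingEvents (F : Type*) [MeasurableSpace F]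
    [StandardBorelSpace F] :
    MeasurableSpace.comap iota (inferInstance : MeasurableSpace (Measure F)) =
    MeasurableSpace.generateFrom
      {C : Set (Finset F) | ∃ (G : Set F) (n : ℕ), MeasurableSet G ∧
        C = {S : Finset F | ((S : Set F) ∩ G).ncard = n}} :=
  comap_iota_eq_generateFrom_countingEvents_general F
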